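/- For positive integers n and prime power q, the quantity λ₁ = ((q^{n−1}−1)/(q³−1)) · ((q^{n−3}−1)/(q²−1)) · ((q^{n−4}−1)/(q−1)) is an integer if and only if n ≡ 0, 1, 3, or 4 (mod 6), for n > 6. -/

import Mathlib

/-!
Write λ₁ = N / D with D = (q³ - 1)(q² - 1)(q - 1) and N = (q^{n-1} - 1)(q^{n-3} - 1)(q^{n-4} - 1).
Since x^a - 1 ∣ x^b - 1 whenever a ∣ b, D divides N as soon as the exponents n - 1, n - 3, n - 4 can be
matched with multiples of 3, 2 and 1, which happens exactly for n ≡ 0, 1, 3, 4 (mod 6).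
Conversely, q² + q + 1 is never divisible by 9, so it has a prime factor p ≠ 3; modulo such a p the
residue of q has order 3, hence p divides q^m - 1 only when 3 ∣ m. For n ≡ 2, 5 (mod 6) none of
n - 1, n - 3, n - 4 is a multiple of 3, so p divides D but not N.
-/

lemma not_nine_dvd_sq_add_add_one (q : ℕ) : ¬ 9 ∣ q ^ 2 + q + 1 := by
  have key : ∀ x : ZMod 9, x ^ 2 + x + 1 ≠ 0 := by decide
  intro h
  exact key q (by exact_mod_cast (ZMod.natCast_eq_zero_iff _ 9).mpr h)

lemma exists_prime_ne_three_dvd_sq_add_add_one {q : ℕ} (hq : 2 ≤ q) :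
    ∃ p, p.Prime ∧ p ≠ 3 ∧ p ∣ q ^ 2 + q + 1 := by
  obtain ⟨t, ht, ht3, ht2⟩ : ∃ t, t ∣ q ^ 2 + q + 1 ∧ ¬ 3 ∣ t ∧ 2 ≤ t := by
    have h9 := not_nine_dvd_sq_add_add_one q
    have h7 : 7 ≤ q ^ 2 + q + 1 := by nlinarith
    by_cases h3 : 3 ∣ q ^ 2 + q + 1
    · obtain ⟨t, ht⟩ := h3
      exact ⟨t, Dvd.intro_left 3 ht.symm, fun ⟨s, hs⟩ => h9 ⟨s, by omega⟩, by omega⟩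
    · exact ⟨_, dvd_rfl, h3, by omega⟩
  exact ⟨t.minFac, Nat.minFac_prime (by omega), fun h => ht3 (h ▸ t.minFac_dvd),
    t.minFac_dvd.trans ht⟩

lemma orderOf_natCast_eq_three {p q : ℕ} [Fact p.Prime] (hp3 : p ≠ 3)
    (hpq : p ∣ q ^ 2 + q + 1) : orderOf (q : ZMod p) = 3 := by
  have h0 : (q : ZMod p) ^ 2 + q + 1 = 0 := by
    exact_mod_cast (ZMod.natCast_eq_zero_iff _ p).mpr hpq
  apply orderOf_eq_prime
  · linear_combination ((q : ZMod p) - 1) * h0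
  · intro h1
    rw [h1] at h0
    have h3 : ((3 : ℕ) : ZMod p) = 0 := by push_cast; linear_combination h0
    exact hp3 ((Nat.prime_dvd_prime_iff_eq Fact.out Nat.prime_three).mp
      ((ZMod.natCast_eq_zero_iff 3 p).mp h3))

lemma prime_dvd_pow_sub_one_iff {p q : ℕ} (hp : p.Prime) (hp3 : p ≠ 3)
    (hpq : p ∣ q ^ 2 + q + 1) (m : ℕ) : (p : ℤ) ∣ (q : ℤ) ^ m - 1 ↔ 3 ∣ m := by
  have := Fact.mk hp
  rw [← ZMod.intCast_zmod_eq_zero_iff_dvd, ← orderOf_natCast_eq_three hp3 hpq,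
    orderOf_dvd_iff_pow_eq_one]
  push_cast
  exact sub_eq_zero

lemma three_dvd_of_pow_three_sub_one_dvd {q : ℕ} (hq : 2 ≤ q) {a b c : ℕ}
    (h : (q : ℤ) ^ 3 - 1 ∣ ((q : ℤ) ^ a - 1) * ((q : ℤ) ^ b - 1) * ((q : ℤ) ^ c - 1)) :
    3 ∣ a ∨ 3 ∣ b ∨ 3 ∣ c := by
  obtain ⟨p, hp, hp3, hpq⟩ := exists_prime_ne_three_dvd_sq_add_add_one hq
  have hpZ : Prime (p : ℤ) := Nat.prime_iff_prime_int.mp hp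
  have hp_dvd : (p : ℤ) ∣ (q : ℤ) ^ 3 - 1 := (prime_dvd_pow_sub_one_iff hp hp3 hpq 3).mpr dvd_rfl
  simp only [← prime_dvd_pow_sub_one_iff hp hp3 hpq]
  rw [← or_assoc, ← hpZ.dvd_mul, ← hpZ.dvd_mul]
  exact hp_dvd.trans h

lemma pow_sub_one_mul_dvd {R : Type*} [CommRing R] (x : R) {a b : ℕ} (ha : 3 ∣ a) (hb : 2 ∣ b)
    (c : ℕ) : (x ^ 3 - 1) * (x ^ 2 - 1) * (x - 1) ∣ (x ^ a - 1) * (x ^ b - 1) * (x ^ c - 1) :=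
  mul_dvd_mul (mul_dvd_mul (dvd_pow_sub_one_of_dvd ha) (dvd_pow_sub_one_of_dvd hb))
    (sub_one_dvd_pow_sub_one x c)

theorem pow_sub_one_prod_dvd_iff {q n : ℕ} (hq : 2 ≤ q) (hn : 4 ≤ n) :
    ((q : ℤ) ^ 3 - 1) * ((q : ℤ) ^ 2 - 1) * ((q : ℤ) - 1) ∣
        ((q : ℤ) ^ (n - 1) - 1) * ((q : ℤ) ^ (n - 3) - 1) * ((q : ℤ) ^ (n - 4) - 1) ↔
      n % 6 = 0 ∨ n % 6 = 1 ∨ n % 6 = 3 ∨ n % 6 = 4 := by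
  constructor
  · intro h
    have := three_dvd_of_pow_three_sub_one_dvd hq (((dvd_mul_right _ _).mul_right _).trans h)
    omega
  · rintro (h | h | h | h)
    · exact (pow_sub_one_mul_dvd (q : ℤ) (a := n - 3) (b := n - 4) (by omega) (by omega)
        (n - 1)).trans (dvd_of_eq (by ring))
    · exact (pow_sub_one_mul_dvd (q : ℤ) (a := n - 4) (b := n - 3) (by omega) (by omega)
        (n - 1)).trans (dvd_of_eq (by ring))
    · exact (pow_sub_one_mul_dvd (q : ℤ) (a := n - 3) (b := n - 1) (by omega) (by omega)
        (n - 4)).trans (dvd_of_eq (by ring))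
    · exact (pow_sub_one_mul_dvd (q : ℤ) (a := n - 1) (b := n - 4) (by omega) (by omega)
        (n - 3)).trans (dvd_of_eq (by ring))

lemma exists_intCast_eq_div_iff_dvd {N D : ℤ} (hD : D ≠ 0) :
    (∃ m : ℤ, (N : ℚ) / D = m) ↔ D ∣ N := by
  have hD' : (D : ℚ) ≠ 0 := by exact_mod_cast hD
  constructor
  · rintro ⟨m, hm⟩
    rw [div_eq_iff hD'] at hm
    exact ⟨m, by rw [mul_comm]; exact_mod_cast hm⟩
  · rintro ⟨m, rfl⟩
    exact ⟨m, by push_cast; field_simp⟩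

theorem stmt17 (q n : ℕ) (hq : ∃ p r : ℕ, p.Prime ∧ 0 < r ∧ q = p ^ r)
    (hn : 6 < n) :
    (∃ m : ℤ,
      (((q : ℚ) ^ (n - 1) - 1) / ((q : ℚ) ^ 3 - 1)) *
        (((q : ℚ) ^ (n - 3) - 1) / ((q : ℚ) ^ 2 - 1)) *
        (((q : ℚ) ^ (n - 4) - 1) / ((q : ℚ) - 1)) = (m : ℚ)) ↔
    (n % 6 = 0 ∨ n % 6 = 1 ∨ n % 6 = 3 ∨ n % 6 = 4) := by
  obtain ⟨p, r, hp, hr, rfl⟩ := hq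
  have hq : 2 ≤ p ^ r := Nat.one_lt_pow hr.ne' hp.two_le
  generalize p ^ r = q at hq ⊢
  have hpos : ∀ k ≠ 0, (0 : ℤ) < (q : ℤ) ^ k - 1 := fun k hk =>
    sub_pos.mpr (one_lt_pow₀ (by exact_mod_cast hq) hk)
  have hD : ((q : ℤ) ^ 3 - 1) * ((q : ℤ) ^ 2 - 1) * ((q : ℤ) ^ 1 - 1) ≠ 0 :=
    (mul_pos (mul_pos (hpos 3 (by norm_num)) (hpos 2 (by norm_num))) (hpos 1 one_ne_zero)).ne'
  rw [pow_one] at hD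
  rw [← pow_sub_one_prod_dvd_iff hq (by omega), ← exists_intCast_eq_div_iff_dvd hD]
  push_cast
  rw [div_mul_div_comm, div_mul_div_comm]
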